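/- Joint concavity of fidelity (special case of Theorem 1 with equal weights): Let d ≥ 1 and n ≥ 1. Let (ρ_i)_{i=1}^n and (σ_i)_{i=1}^n be density matrices on ℂ^d and let (p_i)_{i=1}^n be a probability distribution (p_i ≥ 0, ∑_i p_i = 1). Then F(∑_i p_i ρ_i, ∑_i p_i σ_i) ≥ ∑_i p_i · F(ρ_i, σ_i). -/

import Mathlib

open Matrix
open scoped ComplexOrder

/-- The unique positive semidefinite square root of a positive semidefinite matrix
(junk value `0` if the matrix is not positive semidefinite). -/
noncomputable def msqrt {d : ℕ} (A : Matrix (Fin d) (Fin d) ℂ) : Matrix (Fin d) (Fin d) ℂ :=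
  open scoped Classical in
  if h : A.PosSemidef then
    h.1.eigenvectorUnitary.1 * diagonal ((↑) ∘ (√·) ∘ h.1.eigenvalues) *
      (star h.1.eigenvectorUnitary : Matrix (Fin d) (Fin d) ℂ)
  else 0

/-- The fidelity F(ρ,σ) = tr √(√ρ · σ · √ρ), as a real number. -/
noncomputable def fid {d : ℕ} (ρ σ : Matrix (Fin d) (Fin d) ℂ) : ℝ :=
  ((msqrt (msqrt ρ * σ * msqrt ρ)).trace).re

/-!
Writing `M = √σ √ρ`, the fidelity is the trace norm `tr |M|`, and it has the variational form
`F(ρ, σ) = max { Re tr (Y† X) : X X† ≤ ρ, Y Y† ≤ σ }` over matrices `X, Y` with `d` rows.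
For the bound `Re tr (Y† X) ≤ F(ρ, σ)`, Douglas' lemma factors `X = √ρ U` and `Y = √σ W`
through contractions, and `Re tr (W† M U) ≤ tr |M|` follows from the polar decomposition of `M`
and Cauchy–Schwarz for the Hilbert–Schmidt inner product; the maximum is attained via the polar
decomposition. Joint concavity is then immediate: if `X_i, Y_i` attain `F(ρ_i, σ_i)`, the block
rows `X = [√p_i X_i]_i` and `Y = [√p_i Y_i]_i` satisfy `X X† = ∑ p_i X_i X_i† ≤ ∑ p_i ρ_i`,
likewise for `Y`, and `Re tr (Y† X) = ∑ p_i F(ρ_i, σ_i)`.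
-/

open scoped MatrixOrder

namespace Matrix

open RCLike CFC

variable {𝕜 : Type*} [RCLike 𝕜] {l m n : Type*} [Fintype n]

lemma re_trace_le_re_trace {A B : Matrix n n 𝕜} (h : A ≤ B) : re A.trace ≤ re B.trace := by
  have := (nonneg_iff.mp (le_iff.mp h).trace_nonneg).1
  rwa [trace_sub, map_sub, sub_nonneg] at this

lemma norm_trace_conjTranspose_mul_sq_le [Fintype m] (A B : Matrix n m 𝕜) :
    ‖(Aᴴ * B).trace‖ ^ 2 ≤ re (A * Aᴴ).trace * re (B * Bᴴ).trace := by
  have hinner : ∀ A B : Matrix n m 𝕜,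
      inner 𝕜 (WithLp.toLp 2 A.vec) (WithLp.toLp 2 B.vec) = (Aᴴ * B).trace := fun A B => by
    rw [EuclideanSpace.inner_toLp_toLp, dotProduct_comm, star_vec_dotProduct_vec]
  have := inner_mul_inner_self_le (𝕜 := 𝕜) (WithLp.toLp 2 A.vec) (WithLp.toLp 2 B.vec)
  rwa [norm_inner_symm (WithLp.toLp 2 B.vec), ← sq, hinner, hinner, hinner, trace_mul_comm Aᴴ A,
    trace_mul_comm Bᴴ B] at this

lemma sqrt_smul_mul_sqrt_smul {c : ℝ} (hc : 0 ≤ c) (A : Matrix l n 𝕜) (B : Matrix n m 𝕜) :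
    (√c • A) * (√c • B) = c • (A * B) := by
  rw [Matrix.smul_mul, Matrix.mul_smul, smul_smul, Real.mul_self_sqrt hc]

variable [DecidableEq n]

lemma cfc_mul_cfc (f g : ℝ → ℝ) (B : Matrix n n 𝕜) :
    cfc f B * cfc g B = cfc (fun x => f x * g x) B :=
  (cfc_mul f g B (finite_real_spectrum.continuousOn f) (finite_real_spectrum.continuousOn g)).symm

lemma conjTranspose_sqrt (A : Matrix n n 𝕜) : (sqrt A)ᴴ = sqrt A :=
  (nonneg_iff_posSemidef.mp (sqrt_nonneg A)).1

lemma sqrt_mul_conjTranspose_sqrt {A : Matrix n n 𝕜} (hA : 0 ≤ A) : sqrt A * (sqrt A)ᴴ = A := by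
  rw [conjTranspose_sqrt, sqrt_mul_sqrt_self A hA]

lemma PosSemidef.mul_eq_zero_of_conjTranspose_mul_mul_eq_zero {D : Matrix n n 𝕜}
    (hD : D.PosSemidef) {B : Matrix n m 𝕜} (h : Bᴴ * D * B = 0) : D * B = 0 := by
  rw [← sqrt_mul_sqrt_self D hD.nonneg] at h ⊢
  have : (sqrt D * B)ᴴ * (sqrt D * B) = 0 := by
    rw [conjTranspose_mul, conjTranspose_sqrt, ← h]
    simp only [Matrix.mul_assoc]
  rw [Matrix.mul_assoc, conjTranspose_mul_self_eq_zero.mp this, Matrix.mul_zero]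

variable [Fintype m]

lemma mul_mul_conjTranspose_le_of_mul_conjTranspose_le_one [Fintype l] [DecidableEq l]
    {X : Matrix n m 𝕜} (hX : X * Xᴴ ≤ 1) (S : Matrix l n 𝕜) : S * X * (S * X)ᴴ ≤ S * Sᴴ := by
  have := (le_iff.mp hX).mul_mul_conjTranspose_same S
  rw [Matrix.mul_sub, Matrix.sub_mul, Matrix.mul_one] at this
  rw [le_iff]
  convert this using 2
  simp only [conjTranspose_mul, Matrix.mul_assoc]

/-- Douglas' factorization lemma: the factor is `W = C Y`, where `C = B⁺` is the Moore–Penrose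
inverse of `B` and `Q = B B⁺` the projection onto its range, which contains the range of `Y`. -/
theorem exists_mul_eq_of_mul_conjTranspose_le {B : Matrix n n 𝕜} (hB : B.IsHermitian)
    {Y : Matrix n m 𝕜} (h : Y * Yᴴ ≤ B * B) : ∃ W : Matrix n m 𝕜, B * W = Y ∧ W * Wᴴ ≤ 1 := by
  set C := cfc (·⁻¹ : ℝ → ℝ) B
  set Q := cfc (fun x : ℝ => x * x⁻¹) B
  have hC : Cᴴ = C := cfc_predicate (R := ℝ) _ B
  have hB' : cfc id B = B := cfc_id' ℝ B hB
  have hBC : B * C = Q := by rw [← hB', cfc_mul_cfc]; rfl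
  have hCB : C * B = Q := by rw [← hB', cfc_mul_cfc]; simp_rw [mul_comm]; rfl
  have hQQ : Q * Q = Q := by
    rw [cfc_mul_cfc]; congr 1; ext x; rcases eq_or_ne x 0 with rfl | hx <;> simp [*]
  have hQB : (1 - Q) * B = 0 := by
    rw [sub_mul, one_mul, sub_eq_zero]
    conv_rhs => rw [← hB', cfc_mul_cfc]
    conv_lhs => rw [← hB']
    congr 1; ext x; rcases eq_or_ne x 0 with rfl | hx <;> simp [*]
  have hQ1 : Q ≤ 1 := cfc_le_one _ _ fun x _ => by rcases eq_or_ne x 0 with rfl | hx <;> simp [*]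
  have hQY : Q * Y = Y := by
    have hZ : ((1 - Q) * Y) * ((1 - Q) * Y)ᴴ ≤ 0 :=
      calc ((1 - Q) * Y) * ((1 - Q) * Y)ᴴ = (1 - Q) * (Y * Yᴴ) * (1 - Q)ᴴ := by
            simp only [conjTranspose_mul, Matrix.mul_assoc]
        _ ≤ (1 - Q) * (B * B) * (1 - Q)ᴴ := star_right_conjugate_le_conjugate h _
        _ = 0 := by rw [← mul_assoc, hQB, zero_mul, zero_mul]
    have := self_mul_conjTranspose_eq_zero.mp
      (le_antisymm hZ (posSemidef_self_mul_conjTranspose _).nonneg)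
    rwa [Matrix.sub_mul, Matrix.one_mul, sub_eq_zero, eq_comm] at this
  refine ⟨C * Y, by rw [← Matrix.mul_assoc, hBC, hQY], ?_⟩
  calc C * Y * (C * Y)ᴴ = C * (Y * Yᴴ) * Cᴴ := by simp only [conjTranspose_mul, Matrix.mul_assoc]
    _ ≤ C * (B * B) * Cᴴ := star_right_conjugate_le_conjugate h _
    _ = Q := by rw [hC, ← mul_assoc, hCB, mul_assoc, hBC, hQQ]
    _ ≤ 1 := hQ1

theorem exists_mul_eq_of_mul_conjTranspose_eq {B : Matrix n n 𝕜} (hB : B.IsHermitian)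
    {Y : Matrix n m 𝕜} (h : Y * Yᴴ = B * B) :
    ∃ W : Matrix n m 𝕜, B * W = Y ∧ W * Wᴴ ≤ 1 ∧ W * Wᴴ * B = B := by
  obtain ⟨W, hBW, hW⟩ := exists_mul_eq_of_mul_conjTranspose_le hB h.le
  refine ⟨W, hBW, hW, ?_⟩
  have hzero : Bᴴ * (1 - W * Wᴴ) * B = 0 := by
    rw [hB.eq, Matrix.mul_sub, Matrix.sub_mul, Matrix.mul_one, ← h, ← hBW, conjTranspose_mul,
      hB.eq]
    simp only [Matrix.mul_assoc, sub_self]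
  have := (le_iff.mp hW).mul_eq_zero_of_conjTranspose_mul_mul_eq_zero hzero
  rwa [Matrix.sub_mul, Matrix.one_mul, sub_eq_zero, eq_comm] at this

theorem exists_sqrt_mul_eq_of_mul_conjTranspose_le {B : Matrix n n 𝕜} {Z : Matrix n m 𝕜}
    (hZ : Z * Zᴴ ≤ B) : ∃ K : Matrix n m 𝕜, sqrt B * K = Z ∧ K * Kᴴ ≤ 1 := by
  have hB : 0 ≤ B := (posSemidef_self_mul_conjTranspose Z).nonneg.trans hZ
  refine exists_mul_eq_of_mul_conjTranspose_le (conjTranspose_sqrt B) ?_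
  rwa [sqrt_mul_sqrt_self B hB]

/-- With `M = V† |M|` and `T = |M|^{1/2}`, the trace is the Hilbert–Schmidt inner product of
`T V W` and `T U`, each of Hilbert–Schmidt norm at most `(tr |M|)^{1/2}`. -/
theorem re_trace_conjTranspose_mul_mul_le_re_trace_abs (M : Matrix n n 𝕜) {U W : Matrix n m 𝕜}
    (hU : U * Uᴴ ≤ 1) (hW : W * Wᴴ ≤ 1) : re (Wᴴ * M * U).trace ≤ re (abs M).trace := by
  have hP : (abs M).PosSemidef := nonneg_iff_posSemidef.mp (abs_nonneg M)
  obtain ⟨V, hVP, hV⟩ := exists_mul_eq_of_mul_conjTranspose_le hP.isHermitian (Y := Mᴴ)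
    (by rw [conjTranspose_conjTranspose, abs_mul_abs]; rfl)
  set T := sqrt (abs M)
  have hTT : T * Tᴴ = abs M := sqrt_mul_conjTranspose_sqrt hP.nonneg
  have hM : Wᴴ * M * U = (T * V * W)ᴴ * (T * U) := by
    rw [← conjTranspose_conjTranspose M, ← hVP, ← hTT]
    simp only [conjTranspose_mul, conjTranspose_sqrt, Matrix.mul_assoc, T]
  have hA : re ((T * V * W) * (T * V * W)ᴴ).trace ≤ re (abs M).trace := by
    refine re_trace_le_re_trace ?_
    calc (T * V * W) * (T * V * W)ᴴ ≤ (T * V) * (T * V)ᴴ :=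
          mul_mul_conjTranspose_le_of_mul_conjTranspose_le_one hW _
      _ ≤ T * Tᴴ := mul_mul_conjTranspose_le_of_mul_conjTranspose_le_one hV _
      _ = abs M := hTT
  have hB : re ((T * U) * (T * U)ᴴ).trace ≤ re (abs M).trace :=
    re_trace_le_re_trace (hTT ▸ mul_mul_conjTranspose_le_of_mul_conjTranspose_le_one hU T)
  have hA0 := re_trace_le_re_trace (posSemidef_self_mul_conjTranspose (T * V * W)).nonneg
  have hB0 := re_trace_le_re_trace (posSemidef_self_mul_conjTranspose (T * U)).nonneg
  simp only [trace_zero, map_zero] at hA0 hB0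
  have hCS : ‖((T * V * W)ᴴ * (T * U)).trace‖ ^ 2 ≤ re (abs M).trace ^ 2 :=
    (norm_trace_conjTranspose_mul_sq_le _ _).trans (by nlinarith)
  rw [hM]
  exact (re_le_norm _).trans (le_of_sq_le_sq hCS (hA0.trans hA))

theorem re_trace_conjTranspose_mul_le_re_trace_abs_sqrt_mul_sqrt {R S : Matrix n n 𝕜}
    {X Y : Matrix n m 𝕜} (hX : X * Xᴴ ≤ R) (hY : Y * Yᴴ ≤ S) :
    re (Yᴴ * X).trace ≤ re (abs (sqrt S * sqrt R)).trace := by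
  obtain ⟨U, rfl, hU⟩ := exists_sqrt_mul_eq_of_mul_conjTranspose_le hX
  obtain ⟨W, rfl, hW⟩ := exists_sqrt_mul_eq_of_mul_conjTranspose_le hY
  rw [conjTranspose_mul, conjTranspose_sqrt, Matrix.mul_assoc, ← Matrix.mul_assoc (sqrt S),
    ← Matrix.mul_assoc]
  exact re_trace_conjTranspose_mul_mul_le_re_trace_abs _ hU hW

theorem exists_re_trace_conjTranspose_mul_eq_re_trace_abs_sqrt_mul_sqrt {R S : Matrix n n 𝕜}
    (hR : 0 ≤ R) (hS : 0 ≤ S) : ∃ X Y : Matrix n n 𝕜, X * Xᴴ ≤ R ∧ Y * Yᴴ ≤ S ∧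
      re (Yᴴ * X).trace = re (abs (sqrt S * sqrt R)).trace := by
  set M := sqrt S * sqrt R
  have hP : (abs M).PosSemidef := nonneg_iff_posSemidef.mp (abs_nonneg M)
  obtain ⟨W, hPW, hW, hWP⟩ := exists_mul_eq_of_mul_conjTranspose_eq hP.isHermitian (Y := Mᴴ)
    (by rw [conjTranspose_conjTranspose, abs_mul_abs]; rfl)
  refine ⟨sqrt R * W, sqrt S, ?_, (sqrt_mul_conjTranspose_sqrt hS).le, congrArg re ?_⟩
  · exact (mul_mul_conjTranspose_le_of_mul_conjTranspose_le_one hW _).trans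
      (sqrt_mul_conjTranspose_sqrt hR).le
  · calc ((sqrt S)ᴴ * (sqrt R * W)).trace = ((abs M * W)ᴴ * W).trace := by
          rw [hPW, conjTranspose_conjTranspose, conjTranspose_sqrt, Matrix.mul_assoc]
      _ = (abs M).trace := by
          rw [trace_mul_comm, conjTranspose_mul, hP.1.eq, ← Matrix.mul_assoc, hWP]

section blockRow

variable {α ι : Type*}

def blockRow (X : ι → Matrix l m α) : Matrix l (ι × m) α :=
  of fun a q => X q.1 a q.2

variable [Fintype ι] [NonUnitalNonAssocSemiring α] [Star α]

lemma blockRow_mul_conjTranspose_blockRow (X Y : ι → Matrix l m α) :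
    blockRow X * (blockRow Y)ᴴ = ∑ i, X i * (Y i)ᴴ := by
  ext a b
  simp [blockRow, mul_apply, Fintype.sum_prod_type, Matrix.sum_apply]

lemma trace_conjTranspose_blockRow_mul_blockRow [Fintype l] (X Y : ι → Matrix l m α) :
    ((blockRow Y)ᴴ * blockRow X).trace = ∑ i, ((Y i)ᴴ * X i).trace := by
  simp [blockRow, trace, mul_apply, Fintype.sum_prod_type]

end blockRow

lemma blockRow_sqrt_smul_mul_conjTranspose_le {ι : Type*} [Fintype ι] {c : ι → ℝ}
    (hc : ∀ i, 0 ≤ c i) {X : ι → Matrix n m 𝕜} {B : ι → Matrix n n 𝕜}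
    (hX : ∀ i, X i * (X i)ᴴ ≤ B i) :
    blockRow (fun i => √(c i) • X i) * (blockRow fun i => √(c i) • X i)ᴴ ≤ ∑ i, c i • B i := by
  rw [blockRow_mul_conjTranspose_blockRow]
  gcongr with i
  rw [conjTranspose_smul, star_trivial, sqrt_smul_mul_sqrt_smul (hc i)]
  exact smul_le_smul_of_nonneg_left (hX i) (hc i)

end Matrix

lemma msqrt_eq_sqrt {d : ℕ} {A : Matrix (Fin d) (Fin d) ℂ} (hA : A.PosSemidef) :
    msqrt A = CFC.sqrt A := by
  rw [CFC.sqrt_eq_real_sqrt A hA.nonneg, cfcₙ_eq_cfc, hA.1.cfc_eq, IsHermitian.cfc, msqrt,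
    dif_pos hA, Unitary.conjStarAlgAut_apply]
  rfl

lemma fid_eq_re_trace_abs {d : ℕ} {ρ σ : Matrix (Fin d) (Fin d) ℂ} (hρ : 0 ≤ ρ) (hσ : 0 ≤ σ) :
    fid ρ σ = (CFC.abs (CFC.sqrt σ * CFC.sqrt ρ)).trace.re := by
  have h : star (CFC.sqrt σ * CFC.sqrt ρ) * (CFC.sqrt σ * CFC.sqrt ρ)
      = CFC.sqrt ρ * σ * CFC.sqrt ρ := by
    rw [star_mul, star_eq_conjTranspose, star_eq_conjTranspose, conjTranspose_sqrt,
      conjTranspose_sqrt, Matrix.mul_assoc, ← Matrix.mul_assoc (CFC.sqrt σ),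
      CFC.sqrt_mul_sqrt_self σ hσ, Matrix.mul_assoc]
  have hpsd := (nonneg_iff_posSemidef.mp hσ).mul_mul_conjTranspose_same (CFC.sqrt ρ)
  rw [conjTranspose_sqrt] at hpsd
  rw [fid, msqrt_eq_sqrt (nonneg_iff_posSemidef.mp hρ), CFC.abs, h, msqrt_eq_sqrt hpsd]

theorem re_trace_conjTranspose_mul_le_fid {d : ℕ} {m : Type*} [Fintype m]
    {R S : Matrix (Fin d) (Fin d) ℂ} {X Y : Matrix (Fin d) m ℂ} (hX : X * Xᴴ ≤ R)
    (hY : Y * Yᴴ ≤ S) : (Yᴴ * X).trace.re ≤ fid R S := by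
  rw [fid_eq_re_trace_abs ((posSemidef_self_mul_conjTranspose X).nonneg.trans hX)
    ((posSemidef_self_mul_conjTranspose Y).nonneg.trans hY)]
  exact re_trace_conjTranspose_mul_le_re_trace_abs_sqrt_mul_sqrt hX hY

theorem exists_re_trace_conjTranspose_mul_eq_fid {d : ℕ} {ρ σ : Matrix (Fin d) (Fin d) ℂ}
    (hρ : 0 ≤ ρ) (hσ : 0 ≤ σ) : ∃ X Y : Matrix (Fin d) (Fin d) ℂ,
      X * Xᴴ ≤ ρ ∧ Y * Yᴴ ≤ σ ∧ (Yᴴ * X).trace.re = fid ρ σ := by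
  rw [fid_eq_re_trace_abs hρ hσ]
  exact exists_re_trace_conjTranspose_mul_eq_re_trace_abs_sqrt_mul_sqrt hρ hσ

theorem joint_concavity_of_fidelity_general
    (d n : ℕ)
    (ρ σ : Fin n → Matrix (Fin d) (Fin d) ℂ)
    (hρ : ∀ i, (ρ i).PosSemidef) (hσ : ∀ i, (σ i).PosSemidef)
    (p : Fin n → ℝ) (hp : ∀ i, 0 ≤ p i) :
    ∑ i, p i * fid (ρ i) (σ i) ≤ fid (∑ i, p i • ρ i) (∑ i, p i • σ i) := by
  choose X Y hX hY hXY using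
    fun i => exists_re_trace_conjTranspose_mul_eq_fid (hρ i).nonneg (hσ i).nonneg
  calc ∑ i, p i * fid (ρ i) (σ i)
      = ((blockRow fun i => √(p i) • Y i)ᴴ * blockRow fun i => √(p i) • X i).trace.re := by
        rw [trace_conjTranspose_blockRow_mul_blockRow, Complex.re_sum]
        refine Finset.sum_congr rfl fun i _ => ?_
        rw [← hXY i, conjTranspose_smul, star_trivial, sqrt_smul_mul_sqrt_smul (hp i),
          trace_smul, Complex.smul_re, smul_eq_mul]
    _ ≤ fid (∑ i, p i • ρ i) (∑ i, p i • σ i) :=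
        re_trace_conjTranspose_mul_le_fid (blockRow_sqrt_smul_mul_conjTranspose_le hp hX)
          (blockRow_sqrt_smul_mul_conjTranspose_le hp hY)

/-- Joint concavity of fidelity:
F(∑ p_i ρ_i, ∑ p_i σ_i) ≥ ∑ p_i F(ρ_i, σ_i). -/
theorem joint_concavity_of_fidelity
    (d n : ℕ) (hd : 1 ≤ d) (hn : 1 ≤ n)
    (ρ σ : Fin n → Matrix (Fin d) (Fin d) ℂ)
    (hρ : ∀ i, (ρ i).PosSemidef) (hσ : ∀ i, (σ i).PosSemidef)
    (hρtr : ∀ i, (ρ i).trace = 1) (hσtr : ∀ i, (σ i).trace = 1)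
    (p : Fin n → ℝ) (hp : ∀ i, 0 ≤ p i) (hps : ∑ i, p i = 1) :
    ∑ i, p i * fid (ρ i) (σ i) ≤ fid (∑ i, p i • ρ i) (∑ i, p i • σ i) :=
  joint_concavity_of_fidelity_general d n ρ σ hρ hσ p hp
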